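/- Let a > 100 be an integer. Then f_a(X) = X^3 - a·X^2 - (a+3)·X - 1 has three distinct real roots ρ₁, ρ₂, ρ₃, which can be labelled so that ρ₂ = -1 - 1/ρ₁, ρ₃ = -1 - 1/ρ₂, and they satisfy the estimates a+1 < ρ₁ < a+2, -1 - 1/(a+1) < ρ₂ < -1 - 1/(a+2), and -1/(a+2) < ρ₃ < -1/(a+3). -/

import Mathlib

/-!
The map `x ↦ -1 - 1/x` permutes the roots of `f_A`, because `f_A(-1 - 1/x) · x³ = f_A(x)`.
Since `f_A(A + 1) = -(2A + 3) < 0 < A² + 3A + 1 = f_A(A + 2)`, there is a root `ρ` in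
`(A + 1, A + 2)`; its images are `-1 - 1/ρ` and `-1/(ρ + 1)`, and their bounds follow from those
on `ρ` because `t ↦ 1/t` is decreasing on `(0, ∞)`.
-/

def simplestCubic (A x : ℝ) : ℝ := x ^ 3 - A * x ^ 2 - (A + 3) * x - 1

lemma simplestCubic_neg_one_sub_one_div_mul_pow_three (A : ℝ) {x : ℝ} (hx : x ≠ 0) :
    simplestCubic A (-1 - 1 / x) * x ^ 3 = simplestCubic A x := by
  unfold simplestCubic
  field_simp
  ring

lemma simplestCubic_neg_one_sub_one_div_eq_zero {A x : ℝ} (hx : x ≠ 0)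
    (hroot : simplestCubic A x = 0) : simplestCubic A (-1 - 1 / x) = 0 := by
  have h := simplestCubic_neg_one_sub_one_div_mul_pow_three A hx
  rw [hroot] at h
  exact (mul_eq_zero.mp h).resolve_right (pow_ne_zero 3 hx)

lemma neg_one_sub_one_div_neg_one_sub_one_div {x : ℝ} (hx : x ≠ 0) (hx' : x + 1 ≠ 0) :
    -1 - 1 / (-1 - 1 / x) = -1 / (x + 1) := by
  have h : -1 - 1 / x = -(x + 1) / x := by field_simp; ring
  rw [h]
  field_simp
  ring

lemma exists_simplestCubic_eq_zero_mem_Ioo {A : ℝ} (hA : 0 ≤ A) :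
    ∃ x ∈ Set.Ioo (A + 1) (A + 2), simplestCubic A x = 0 := by
  have hcont : ContinuousOn (simplestCubic A) (Set.Icc (A + 1) (A + 2)) := by
    unfold simplestCubic
    fun_prop
  refine intermediate_value_Ioo (by linarith) hcont ⟨?_, ?_⟩ <;>
    · unfold simplestCubic
      nlinarith

/-- Let `a > 100` be an integer. Then `f_a` has three distinct real roots `ρ₁, ρ₂, ρ₃`,
which can be labelled so that `ρ₂ = -1 - 1/ρ₁`, `ρ₃ = -1 - 1/ρ₂`, and they satisfy
`a+1 < ρ₁ < a+2`, `-1 - 1/(a+1) < ρ₂ < -1 - 1/(a+2)` and `-1/(a+2) < ρ₃ < -1/(a+3)`. -/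
theorem simplest_cubic_real_roots (a : ℤ) (ha : 100 < a) :
    ∃ ρ₁ ρ₂ ρ₃ : ℝ,
      ρ₁ ≠ ρ₂ ∧ ρ₁ ≠ ρ₃ ∧ ρ₂ ≠ ρ₃ ∧
      ρ₁ ^ 3 - (a : ℝ) * ρ₁ ^ 2 - ((a : ℝ) + 3) * ρ₁ - 1 = 0 ∧
      ρ₂ ^ 3 - (a : ℝ) * ρ₂ ^ 2 - ((a : ℝ) + 3) * ρ₂ - 1 = 0 ∧
      ρ₃ ^ 3 - (a : ℝ) * ρ₃ ^ 2 - ((a : ℝ) + 3) * ρ₃ - 1 = 0 ∧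
      ρ₂ = -1 - 1/ρ₁ ∧ ρ₃ = -1 - 1/ρ₂ ∧
      (a : ℝ) + 1 < ρ₁ ∧ ρ₁ < (a : ℝ) + 2 ∧
      -1 - 1/((a : ℝ) + 1) < ρ₂ ∧ ρ₂ < -1 - 1/((a : ℝ) + 2) ∧
      -1/((a : ℝ) + 2) < ρ₃ ∧ ρ₃ < -1/((a : ℝ) + 3) := by
  have hA : (0 : ℝ) ≤ a := by exact_mod_cast (by omega : (0 : ℤ) ≤ a)
  obtain ⟨ρ, ⟨hρl, hρr⟩, hρ⟩ := exists_simplestCubic_eq_zero_mem_Ioo hA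
  have hρ_pos : 0 < ρ := by linarith
  have hinv_pos : 0 < 1 / ρ := by positivity
  have hroot₂ := simplestCubic_neg_one_sub_one_div_eq_zero hρ_pos.ne' hρ
  have hroot₃ := simplestCubic_neg_one_sub_one_div_eq_zero (by linarith) hroot₂
  have hρ₃ : -1 - 1 / (-1 - 1 / ρ) = -(1 / (ρ + 1)) := by
    rw [neg_one_sub_one_div_neg_one_sub_one_div hρ_pos.ne' (by linarith), neg_div]
  have hinv₃_pos : 0 < 1 / (ρ + 1) := by positivity
  have hinv₃_lt_one : 1 / (ρ + 1) < 1 := by rw [div_lt_one] <;> linarith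
  have h₂l := one_div_lt_one_div_of_lt (by linarith) hρl
  have h₂r := one_div_lt_one_div_of_lt hρ_pos hρr
  have h₃l := one_div_lt_one_div_of_lt (by linarith) (by linarith : (a : ℝ) + 2 < ρ + 1)
  have h₃r := one_div_lt_one_div_of_lt (by linarith) (by linarith : ρ + 1 < (a : ℝ) + 3)
  refine ⟨ρ, -1 - 1 / ρ, -1 - 1 / (-1 - 1 / ρ), ?_, ?_, ?_, hρ, hroot₂, hroot₃, rfl, rfl,
    hρl, hρr, by linarith, by linarith, ?_, ?_⟩
  · exact ne_of_gt (by linarith)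
  all_goals rw [hρ₃]
  · exact ne_of_gt (by linarith)
  · exact ne_of_lt (by linarith)
  · rw [neg_div]; exact neg_lt_neg h₃l
  · rw [neg_div]; exact neg_lt_neg h₃r
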